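/- arXiv:1905.11346 — 2 statements merged into one kernel-verified Lean document; each statement's English description precedes it below -/
import Mathlib

section
/- Let W, g, h, hstar, Cstar, C be real numbers such that W ≥ 1, 0 ≤ g, 0 ≤ h, h ≤ hstar, Cstar = g + hstar, and C ≤ g + W·h. Then C ≤ W·Cstar − (W − 1)·g. -/
theorem wastar_improved_bound (W g h hstar Cstar C : ℝ)
    (hW : W ≥ 1) (hg : 0 ≤ g) (hh : 0 ≤ h) (hadm : h ≤ hstar)
    (hCstar : Cstar = g + hstar) (hC : C ≤ g + W * h) :
    C ≤ W * Cstar - (W - 1) * g := by subst hCstar; nlinarith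
end

section
/- Let W, C, Cstar, F, gmin, g, h, hstar be real numbers such that W ≥ 1, C ≥ 0, Cstar > 0, 0 ≤ gmin ≤ g, 0 ≤ h, h ≤ hstar, Cstar = g + hstar, F ≤ g + W·h, and F + (W − 1)·gmin > 0. Then C / Cstar ≤ (C·W) / (F + (W − 1)·gmin). -/
/-!
At the iteration attaining `F`, the optimal-path node gives `F ≤ g + W·h ≤ g + W·h*`, and
`gmin ≤ g` gives `(W - 1)·gmin ≤ (W - 1)·g`; adding, `F + (W - 1)·gmin ≤ W·C*`. Hence
`C / C* = C·W / (W·C*) ≤ C·W / (F + (W - 1)·gmin)`.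
-/

lemma weighted_f_add_le_mul_optimal_cost {W F gmin g h hstar : ℝ} (hW : 1 ≤ W)
    (hgmin : gmin ≤ g) (hadm : h ≤ hstar) (hF : F ≤ g + W * h) :
    F + (W - 1) * gmin ≤ W * (g + hstar) := by
  have hWh : W * h ≤ W * hstar := mul_le_mul_of_nonneg_left hadm (by linarith)
  have hWgmin : (W - 1) * gmin ≤ (W - 1) * g := mul_le_mul_of_nonneg_left hgmin (by linarith)
  linarith

lemma div_le_mul_div_of_le_mul {C W X D : ℝ} (hC : 0 ≤ C) (hW : 0 < W) (hD : 0 < D)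
    (hDX : D ≤ W * X) : C / X ≤ C * W / D := by
  calc C / X = C * W / (W * X) := by rw [mul_comm W X, mul_div_mul_right C X hW.ne']
    _ ≤ C * W / D := div_le_div_of_nonneg_left (mul_nonneg hC hW.le) hD hDX

theorem wastar_F_bound_valid_general (W C Cstar F gmin g h hstar : ℝ)
    (hW : W ≥ 1) (hC : C ≥ 0)
    (hgming : gmin ≤ g)
    (hadm : h ≤ hstar)
    (hCstareq : Cstar = g + hstar)
    (hF : F ≤ g + W * h)
    (hpos : F + (W - 1) * gmin > 0) :
    C / Cstar ≤ (C * W) / (F + (W - 1) * gmin) := by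
  subst hCstareq
  exact div_le_mul_div_of_le_mul hC (by linarith) hpos
    (weighted_f_add_le_mul_optimal_cost hW hgming hadm hF)

theorem wastar_F_bound_valid (W C Cstar F gmin g h hstar : ℝ)
    (hW : W ≥ 1) (hC : C ≥ 0) (hCstar : Cstar > 0)
    (hgmin0 : 0 ≤ gmin) (hgming : gmin ≤ g)
    (hh : 0 ≤ h) (hadm : h ≤ hstar)
    (hCstareq : Cstar = g + hstar)
    (hF : F ≤ g + W * h)
    (hpos : F + (W - 1) * gmin > 0) :
    C / Cstar ≤ (C * W) / (F + (W - 1) * gmin) :=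
  wastar_F_bound_valid_general W C Cstar F gmin g h hstar hW hC hgming hadm hCstareq hF hpos
end
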